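/- Zig-zag sum-rate bound: Let s_{j-B-1}, s_j, s_{j+1} be finite random variables with the Markov chain s_{j+1} → s_j → (f_j, s_{j-B-1}), where f_j is a function of s_j. Suppose H(s_j | s_{j-B-1}, s_{j+1}, f_j) ≤ nε and H(s_{j+1} | s_{j-B-1}, f_j, f_{j+1}) ≤ nε for some encoder output f_{j+1}. Then H(f_j) + H(f_{j+1}) ≥ n H'(s_j | s_{j-B-1}) + n H'(s_{j+1} | s_j) − 2nε, where n H'(·|·) denotes the corresponding n-letter conditional entropies H(s_j^n | s_{j-B-1}^n) etc. Formally, with single random variables: H(f_j) + H(f_{j+1}) ≥ H(s_j | s_{j-B-1}) + H(s_{j+1} | s_j) − 2nε. -/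

import Mathlib

open Finset

variable {Ω : Type} [Fintype Ω]

/-- Probability that the random variable `X` takes value `x`, under weights `μ`. -/
noncomputable def pr (μ : Ω → ℝ) {α : Type} [Fintype α] [DecidableEq α]
    (X : Ω → α) (x : α) : ℝ :=
  ∑ ω, if X ω = x then μ ω else 0

/-- Shannon entropy (base 2) of the random variable `X`. -/
noncomputable def ent (μ : Ω → ℝ) {α : Type} [Fintype α] [DecidableEq α]
    (X : Ω → α) : ℝ :=
  -∑ x, pr μ X x * Real.logb 2 (pr μ X x)

/-- Conditional Shannon entropy `H(X | Y) = H(X, Y) - H(Y)`. -/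
noncomputable def centr (μ : Ω → ℝ) {α β : Type} [Fintype α] [DecidableEq α]
    [Fintype β] [DecidableEq β] (X : Ω → α) (Y : Ω → β) : ℝ :=
  ent μ (fun ω => (X ω, Y ω)) - ent μ Y

/-- Conditional mutual information `I(X ; Y | Z) = H(X|Z) + H(Y|Z) - H(X,Y|Z)`. -/
noncomputable def mi (μ : Ω → ℝ) {α β γ : Type} [Fintype α] [DecidableEq α]
    [Fintype β] [DecidableEq β] [Fintype γ] [DecidableEq γ]
    (X : Ω → α) (Y : Ω → β) (Z : Ω → γ) : ℝ :=
  centr μ X Z + centr μ Y Z - centr μ (fun ω => (X ω, Y ω)) Z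

/-- `μ` is a probability mass function on `Ω`. -/
structure IsPMF (μ : Ω → ℝ) : Prop where
  nonneg : ∀ ω, 0 ≤ μ ω
  sum_one : ∑ ω, μ ω = 1

/-!
Bound the sum rate by the entropy of the pair of codewords given `s_{j-B-1}`; since the codewords
are functions of `(s_j, s_{j+1})`, this is `H(s_j, s_{j+1} | s_{j-B-1})` minus the equivocation of
`(s_j, s_{j+1})` given the codewords and `s_{j-B-1}`. Decoding `s_{j+1}` first and then `s_j`
(the two Fano conditions) bounds that equivocation by `2nε`, and the Markov chain turns
`H(s_{j+1} | s_j, s_{j-B-1})` into `H(s_{j+1} | s_j)`.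
-/

open Real

/-- Gibbs' inequality, from `log x ≤ x - 1`. -/
lemma sum_mul_logb_nonpos {ι : Type*} (s : Finset ι) (w r : ι → ℝ) (hw : ∀ i ∈ s, 0 ≤ w i)
    (hr : ∀ i ∈ s, 0 < w i → 0 < r i) (hsum : ∑ i ∈ s, w i * r i ≤ ∑ i ∈ s, w i) :
    ∑ i ∈ s, w i * logb 2 (r i) ≤ 0 := by
  have hlog2 : 0 < log 2 := log_pos one_lt_two
  have hterm : ∀ i ∈ s, w i * logb 2 (r i) ≤ (w i * r i - w i) / log 2 := by
    intro i hi
    rcases (hw i hi).eq_or_lt with h0 | hpos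
    · simp [← h0]
    · rw [logb, ← mul_div_assoc, div_le_div_iff_of_pos_right hlog2, ← mul_sub_one]
      exact mul_le_mul_of_nonneg_left (log_le_sub_one_of_pos (hr i hi hpos)) hpos.le
  calc ∑ i ∈ s, w i * logb 2 (r i) ≤ ∑ i ∈ s, (w i * r i - w i) / log 2 := sum_le_sum hterm
    _ = (∑ i ∈ s, w i * r i - ∑ i ∈ s, w i) / log 2 := by rw [← sum_div, sum_sub_distrib]
    _ ≤ 0 := div_nonpos_of_nonpos_of_nonneg (by linarith) hlog2.le

section Entropy

variable (μ : Ω → ℝ) {α β γ : Type} [Fintype α] [DecidableEq α] [Fintype β] [DecidableEq β]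
  [Fintype γ] [DecidableEq γ]

lemma pr_nonneg (hμ : ∀ ω, 0 ≤ μ ω) (X : Ω → α) (x : α) : 0 ≤ pr μ X x :=
  sum_nonneg fun ω _ => by split_ifs <;> simp [hμ ω]

lemma pr_pos_of_pos (hμ : ∀ ω, 0 ≤ μ ω) (X : Ω → α) {ω : Ω} (hω : 0 < μ ω) :
    0 < pr μ X (X ω) := by
  refine hω.trans_le ?_
  simpa [pr] using single_le_sum (f := fun ω' => if X ω' = X ω then μ ω' else 0)
    (fun ω' _ => by split_ifs <;> simp [hμ ω']) (mem_univ ω)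

lemma sum_pr_mul (X : Ω → α) (g : α → ℝ) : ∑ x, pr μ X x * g x = ∑ ω, μ ω * g (X ω) := by
  simp only [pr, sum_mul, ite_mul, zero_mul]
  rw [sum_comm]
  simp

lemma sum_pr (X : Ω → α) : ∑ x, pr μ X x = ∑ ω, μ ω := by
  simpa using sum_pr_mul μ X fun _ => 1

lemma sum_pr_pair_left (X : Ω → α) (Z : Ω → γ) (z : γ) :
    ∑ x, pr μ (fun ω => (X ω, Z ω)) (x, z) = pr μ Z z := by
  simp only [pr, Prod.mk.injEq]
  rw [sum_comm]
  refine sum_congr rfl fun ω _ => ?_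
  by_cases hz : Z ω = z <;> simp [hz]

lemma ent_eq_sum (X : Ω → α) : ent μ X = -∑ ω, μ ω * logb 2 (pr μ X (X ω)) := by
  rw [ent, sum_pr_mul μ X fun x => logb 2 (pr μ X x)]

lemma ent_congr (X : Ω → α) (Y : Ω → β) (h : ∀ ω₁ ω₂, X ω₁ = X ω₂ ↔ Y ω₁ = Y ω₂) :
    ent μ X = ent μ Y := by
  simp only [ent_eq_sum, pr]
  congr 1
  refine sum_congr rfl fun ω _ => ?_
  simp only [h _ ω]

lemma centr_congr {α' β' : Type} [Fintype α'] [DecidableEq α'] [Fintype β'] [DecidableEq β']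
    (X : Ω → α) (X' : Ω → α') (Y : Ω → β) (Y' : Ω → β')
    (hX : ∀ ω₁ ω₂, X ω₁ = X ω₂ ↔ X' ω₁ = X' ω₂) (hY : ∀ ω₁ ω₂, Y ω₁ = Y ω₂ ↔ Y' ω₁ = Y' ω₂) :
    centr μ X Y = centr μ X' Y' := by
  rw [centr, centr, ent_congr μ Y Y' hY,
    ent_congr μ (fun ω => (X ω, Y ω)) (fun ω => (X' ω, Y' ω))
      fun ω₁ ω₂ => by simp only [Prod.mk.injEq, hX, hY]]

lemma centr_pair_eq_add (X : Ω → α) (Y : Ω → β) (Z : Ω → γ) :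
    centr μ (fun ω => (X ω, Y ω)) Z = centr μ X Z + centr μ Y (fun ω => (X ω, Z ω)) := by
  have h : ent μ (fun ω => ((X ω, Y ω), Z ω)) = ent μ (fun ω => (Y ω, (X ω, Z ω))) :=
    ent_congr μ _ _ fun _ _ => by simp only [Prod.mk.injEq]; tauto
  simp only [centr, h]
  ring

lemma centr_pair_comm (X : Ω → α) (Y : Ω → β) (Z : Ω → γ) :
    centr μ (fun ω => (X ω, Y ω)) Z = centr μ (fun ω => (Y ω, X ω)) Z :=
  centr_congr μ _ _ Z Z (fun _ _ => by simp only [Prod.mk.injEq]; tauto) fun _ _ => Iff.rfl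

lemma mi_eq_centr_sub_centr (X : Ω → α) (Y : Ω → β) (Z : Ω → γ) :
    mi μ X Y Z = centr μ X Z - centr μ X (fun ω => (Y ω, Z ω)) := by
  rw [mi, centr_pair_comm, centr_pair_eq_add]
  ring

lemma mi_eq_sum (X : Ω → α) (Y : Ω → β) (Z : Ω → γ) :
    mi μ X Y Z = -∑ ω, μ ω *
      (logb 2 (pr μ (fun ω => (X ω, Z ω)) (X ω, Z ω))
        + logb 2 (pr μ (fun ω => (Y ω, Z ω)) (Y ω, Z ω))
        - logb 2 (pr μ (fun ω => ((X ω, Y ω), Z ω)) ((X ω, Y ω), Z ω))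
        - logb 2 (pr μ Z (Z ω))) := by
  simp only [mi, centr, ent_eq_sum, mul_add, mul_sub, sum_add_distrib, sum_sub_distrib]
  ring

lemma sum_mul_pr_ratio_le (hμ : ∀ ω, 0 ≤ μ ω) (X : Ω → α) (Y : Ω → β) (Z : Ω → γ) :
    ∑ ω, μ ω * (pr μ (fun ω => (X ω, Z ω)) (X ω, Z ω) * pr μ (fun ω => (Y ω, Z ω)) (Y ω, Z ω)
      / (pr μ (fun ω => ((X ω, Y ω), Z ω)) ((X ω, Y ω), Z ω) * pr μ Z (Z ω))) ≤ ∑ ω, μ ω := by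
  set pXZ := pr μ fun ω => (X ω, Z ω)
  set pYZ := pr μ fun ω => (Y ω, Z ω)
  set pXYZ := pr μ fun ω => ((X ω, Y ω), Z ω)
  set pZ := pr μ Z
  rw [← sum_pr_mul μ (fun ω => ((X ω, Y ω), Z ω))
    fun v => pXZ (v.1.1, v.2) * pYZ (v.1.2, v.2) / (pXYZ v * pZ v.2)]
  calc ∑ v, pXYZ v * (pXZ (v.1.1, v.2) * pYZ (v.1.2, v.2) / (pXYZ v * pZ v.2))
      ≤ ∑ v : (α × β) × γ, pXZ (v.1.1, v.2) * pYZ (v.1.2, v.2) / pZ v.2 := by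
        refine sum_le_sum fun v _ => ?_
        have hv : 0 ≤ pXYZ v := pr_nonneg μ hμ _ v
        rcases hv.eq_or_lt with h0 | hpos
        · rw [← h0, zero_mul]
          exact div_nonneg (mul_nonneg (pr_nonneg μ hμ _ _) (pr_nonneg μ hμ _ _))
            (pr_nonneg μ hμ _ _)
        · rw [← mul_div_assoc, mul_div_mul_left _ _ hpos.ne']
    _ = ∑ z, (∑ x, pXZ (x, z)) * (∑ y, pYZ (y, z)) / pZ z := by
        rw [Fintype.sum_prod_type, sum_comm]
        simp only [Fintype.sum_prod_type, sum_mul_sum, sum_div]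
    _ = ∑ z, pZ z * pZ z / pZ z := by simp only [pXZ, pYZ, pZ, sum_pr_pair_left]
    _ ≤ ∑ z, pZ z := sum_le_sum fun z _ => by
        rcases eq_or_ne (pZ z) 0 with h0 | hne
        · simp [h0]
        · rw [mul_div_cancel_right₀ _ hne]
    _ = ∑ ω, μ ω := sum_pr μ Z

lemma mi_nonneg (hμ : ∀ ω, 0 ≤ μ ω) (X : Ω → α) (Y : Ω → β) (Z : Ω → γ) : 0 ≤ mi μ X Y Z := by
  have hpr : ∀ {ω} (hω : 0 < μ ω) {δ : Type} [Fintype δ] [DecidableEq δ] (W : Ω → δ),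
      0 < pr μ W (W ω) := fun hω _ _ _ W => pr_pos_of_pos μ hμ W hω
  set pXZ := pr μ fun ω => (X ω, Z ω)
  set pYZ := pr μ fun ω => (Y ω, Z ω)
  set pXYZ := pr μ fun ω => ((X ω, Y ω), Z ω)
  set pZ := pr μ Z
  have hterm : ∀ ω, μ ω * (logb 2 (pXZ (X ω, Z ω)) + logb 2 (pYZ (Y ω, Z ω))
      - logb 2 (pXYZ ((X ω, Y ω), Z ω)) - logb 2 (pZ (Z ω)))
      = μ ω * logb 2 (pXZ (X ω, Z ω) * pYZ (Y ω, Z ω) / (pXYZ ((X ω, Y ω), Z ω) * pZ (Z ω))) := by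
    intro ω
    rcases (hμ ω).eq_or_lt with h0 | hpos
    · simp [← h0]
    · have hXZ := (hpr hpos fun ω => (X ω, Z ω)).ne'
      have hYZ := (hpr hpos fun ω => (Y ω, Z ω)).ne'
      have hXYZ := (hpr hpos fun ω => ((X ω, Y ω), Z ω)).ne'
      have hZ := (hpr hpos Z).ne'
      rw [logb_div (mul_ne_zero hXZ hYZ) (mul_ne_zero hXYZ hZ), logb_mul hXZ hYZ,
        logb_mul hXYZ hZ]
      ring
  rw [mi_eq_sum, sum_congr rfl fun ω _ => hterm ω, neg_nonneg]
  exact sum_mul_logb_nonpos _ μ _ (fun ω _ => hμ ω)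
    (fun ω _ hpos => by
      have := hpr hpos fun ω => (X ω, Z ω)
      have := hpr hpos fun ω => (Y ω, Z ω)
      have := hpr hpos fun ω => ((X ω, Y ω), Z ω)
      have := hpr hpos Z
      positivity)
    (sum_mul_pr_ratio_le μ hμ X Y Z)

lemma centr_pair_le (hμ : ∀ ω, 0 ≤ μ ω) (X : Ω → α) (Y : Ω → β) (Z : Ω → γ) :
    centr μ X (fun ω => (Y ω, Z ω)) ≤ centr μ X Z := by
  linarith [mi_nonneg μ hμ X Y Z, mi_eq_centr_sub_centr μ X Y Z]

lemma centr_le_centr_of_determines (hμ : ∀ ω, 0 ≤ μ ω) (X : Ω → α) (Y : Ω → β) (Y' : Ω → γ)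
    (h : ∀ ω₁ ω₂, Y ω₁ = Y ω₂ → Y' ω₁ = Y' ω₂) : centr μ X Y ≤ centr μ X Y' := by
  calc centr μ X Y = centr μ X (fun ω => (Y ω, Y' ω)) :=
        centr_congr μ X X _ _ (fun _ _ => Iff.rfl) fun ω₁ ω₂ => by
          simp only [Prod.mk.injEq]
          exact ⟨fun hY => ⟨hY, h _ _ hY⟩, And.left⟩
    _ ≤ centr μ X Y' := centr_pair_le μ hμ X Y Y'

lemma ent_const_unit (hμ : IsPMF μ) : ent μ (fun _ : Ω => ()) = 0 := by
  have : pr μ (fun _ : Ω => ()) () = 1 := by simpa [pr] using hμ.sum_one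
  simp [ent, this]

lemma centr_le_ent (hμ : IsPMF μ) (X : Ω → α) (Y : Ω → β) : centr μ X Y ≤ ent μ X := by
  calc centr μ X Y ≤ centr μ X (fun _ => ()) :=
        centr_le_centr_of_determines μ hμ.nonneg X Y _ fun _ _ _ => rfl
    _ = ent μ X := by
        rw [centr, ent_const_unit μ hμ, sub_zero]
        exact ent_congr μ _ _ fun _ _ => by simp

lemma centr_pair_le_ent_add_ent (hμ : IsPMF μ) (X : Ω → α) (Y : Ω → β) (Z : Ω → γ) :
    centr μ (fun ω => (X ω, Y ω)) Z ≤ ent μ X + ent μ Y := by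
  rw [centr_pair_eq_add]
  exact add_le_add (centr_le_ent μ hμ X Z) (centr_le_ent μ hμ Y _)

lemma centr_comp_eq_sub (g : β → α) (Y : Ω → β) (Z : Ω → γ) :
    centr μ (fun ω => g (Y ω)) Z = centr μ Y Z - centr μ Y (fun ω => (g (Y ω), Z ω)) := by
  have h : centr μ (fun ω => (g (Y ω), Y ω)) Z = centr μ Y Z :=
    centr_congr μ _ _ Z Z (fun _ _ => by simp only [Prod.mk.injEq]; grind) fun _ _ => Iff.rfl
  rw [← h, centr_pair_eq_add]
  ring

/-- The Markov chain `X → Y → Z` read in both directions. -/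
lemma centr_eq_of_centr_pair_eq (X : Ω → α) (Y : Ω → β) (Z : Ω → γ)
    (h : centr μ X (fun ω => (Y ω, Z ω)) = centr μ X Y) :
    centr μ Z (fun ω => (Y ω, X ω)) = centr μ Z Y := by
  have hXYZ : ent μ (fun ω => (Z ω, Y ω, X ω)) = ent μ (fun ω => (X ω, Y ω, Z ω)) :=
    ent_congr μ _ _ fun _ _ => by simp only [Prod.mk.injEq]; tauto
  have hXY : ent μ (fun ω => (Y ω, X ω)) = ent μ (fun ω => (X ω, Y ω)) :=
    ent_congr μ _ _ fun _ _ => by simp only [Prod.mk.injEq]; tauto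
  have hYZ : ent μ (fun ω => (Z ω, Y ω)) = ent μ (fun ω => (Y ω, Z ω)) :=
    ent_congr μ _ _ fun _ _ => by simp only [Prod.mk.injEq]; tauto
  simp only [centr] at h ⊢
  linarith

end Entropy

theorem zigzag_sum_rate_bound_general
    {S A1 A2 : Type} [Fintype S] [DecidableEq S]
    [Fintype A1] [DecidableEq A1] [Fintype A2] [DecidableEq A2]
    (μ : Ω → ℝ) (hμ : IsPMF μ) (n ε : ℝ)
    (sA sJ sJ1 : Ω → S) (F : S → A1) (G : S → A2)
    (hMarkov : centr μ sA (fun ω => (sJ ω, sJ1 ω)) = centr μ sA sJ)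
    (hFano1 : centr μ sJ (fun ω => (sA ω, sJ1 ω, F (sJ ω))) ≤ n * ε)
    (hFano2 : centr μ sJ1 (fun ω => (sA ω, F (sJ ω), G (sJ1 ω))) ≤ n * ε) :
    ent μ (fun ω => F (sJ ω)) + ent μ (fun ω => G (sJ1 ω))
      ≥ centr μ sJ sA + centr μ sJ1 sJ - 2 * n * ε := by
  have hrate := centr_pair_le_ent_add_ent μ hμ (fun ω => F (sJ ω)) (fun ω => G (sJ1 ω)) sA
  have hcodes : centr μ (fun ω => (F (sJ ω), G (sJ1 ω))) sA
      = centr μ (fun ω => (sJ1 ω, sJ ω)) sA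
        - centr μ (fun ω => (sJ1 ω, sJ ω)) (fun ω => ((F (sJ ω), G (sJ1 ω)), sA ω)) :=
    centr_comp_eq_sub μ (fun p : S × S => (F p.2, G p.1)) (fun ω => (sJ1 ω, sJ ω)) sA
  have hsources : centr μ (fun ω => (sJ1 ω, sJ ω)) sA = centr μ sJ sA + centr μ sJ1 sJ := by
    rw [centr_pair_comm, centr_pair_eq_add, centr_eq_of_centr_pair_eq μ sA sJ sJ1 hMarkov]
  have hdecode : centr μ (fun ω => (sJ1 ω, sJ ω)) (fun ω => ((F (sJ ω), G (sJ1 ω)), sA ω))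
      ≤ 2 * n * ε := by
    rw [centr_pair_eq_add]
    have hJ1 := (centr_le_centr_of_determines μ hμ.nonneg sJ1
      (fun ω => ((F (sJ ω), G (sJ1 ω)), sA ω)) (fun ω => (sA ω, F (sJ ω), G (sJ1 ω)))
      fun _ _ h => by simp_all).trans hFano2
    have hJ := (centr_le_centr_of_determines μ hμ.nonneg sJ
      (fun ω => (sJ1 ω, (F (sJ ω), G (sJ1 ω)), sA ω)) (fun ω => (sA ω, sJ1 ω, F (sJ ω)))
      fun _ _ h => by simp_all).trans hFano1
    linarith
  linarith

/-- zig-zag sum-rate bound with memoryless encoders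
`f_j = F(s_j)`, `f_{j+1} = G(s_{j+1})`:
`H(f_j) + H(f_{j+1}) ≥ H(s_j | s_{j-B-1}) + H(s_{j+1} | s_j) − 2nε`.
Here `sA = s_{j-B-1}`, `sJ = s_j`, `sJ1 = s_{j+1}`. -/
theorem zigzag_sum_rate_bound
    {S A1 A2 : Type} [Fintype S] [DecidableEq S]
    [Fintype A1] [DecidableEq A1] [Fintype A2] [DecidableEq A2]
    (μ : Ω → ℝ) (hμ : IsPMF μ) (n ε : ℝ) (hn : 0 < n) (hε : 0 ≤ ε)
    (sA sJ sJ1 : Ω → S) (F : S → A1) (G : S → A2)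
    (hMarkov : centr μ sA (fun ω => (sJ ω, sJ1 ω)) = centr μ sA sJ)
    (hFano1 : centr μ sJ (fun ω => (sA ω, sJ1 ω, F (sJ ω))) ≤ n * ε)
    (hFano2 : centr μ sJ1 (fun ω => (sA ω, F (sJ ω), G (sJ1 ω))) ≤ n * ε) :
    ent μ (fun ω => F (sJ ω)) + ent μ (fun ω => G (sJ1 ω))
      ≥ centr μ sJ sA + centr μ sJ1 sJ - 2 * n * ε :=
  zigzag_sum_rate_bound_general μ hμ n ε sA sJ sJ1 F G hMarkov hFano1 hFano2
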